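/- Let S ⊆ 𝔽₂^{2n} be a finite nonempty set and let K ≥ 1 be a real number such that |S + S| ≤ K·|S|. Then nac(4S) ≤ 2·K⁵ · nac(2S), where tS denotes the t-fold sumset {s₁ + ⋯ + s_t : s₁, …, s_t ∈ S}. -/
import Mathlib


open Finset
open scoped Pointwise

/-- The symplectic product on `𝔽₂^{2n}`: `[x,y] = ⟨x₁,y₂⟩ + ⟨x₂,y₁⟩`. -/
def sympl (n : ℕ) (x y : (Fin n → ZMod 2) × (Fin n → ZMod 2)) : ZMod 2 :=
  (∑ i, x.1 i * y.2 i) + (∑ i, x.2 i * y.1 i)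

/-- `nac A`: the maximum cardinality of a finite subset of `A` whose elements
pairwise anticommute (pairwise symplectic product `1`). -/
noncomputable def nac (n : ℕ) (A : Set ((Fin n → ZMod 2) × (Fin n → ZMod 2))) : ℕ :=
  sSup {k | ∃ T : Finset ((Fin n → ZMod 2) × (Fin n → ZMod 2)),
    ↑T ⊆ A ∧ (∀ x ∈ T, ∀ y ∈ T, x ≠ y → sympl n x y = 1) ∧ T.card = k}

abbrev Vn (n : ℕ) := (Fin n → ZMod 2) × (Fin n → ZMod 2)

lemma zmod2_add_self (z : ZMod 2) : z + z = 0 := by revert z; decide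

lemma sympl_comm (n : ℕ) (x y : (Fin n → ZMod 2) × (Fin n → ZMod 2)) :
    sympl n x y = sympl n y x := by
  unfold sympl
  rw [add_comm]
  congr 1 <;> exact Finset.sum_congr rfl fun i _ => mul_comm _ _

lemma sympl_add_left (n : ℕ) (a b c : (Fin n → ZMod 2) × (Fin n → ZMod 2)) :
    sympl n (a + b) c = sympl n a c + sympl n b c := by
  unfold sympl
  simp only [Prod.fst_add, Prod.snd_add, Pi.add_apply, add_mul, Finset.sum_add_distrib]
  ring

lemma sympl_add_right (n : ℕ) (a b c : (Fin n → ZMod 2) × (Fin n → ZMod 2)) :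
    sympl n a (b + c) = sympl n a b + sympl n a c := by
  rw [sympl_comm, sympl_add_left, sympl_comm n b, sympl_comm n c]

lemma sympl_self (n : ℕ) (x : (Fin n → ZMod 2) × (Fin n → ZMod 2)) :
    sympl n x x = 0 := by
  unfold sympl
  rw [show ∑ i, x.2 i * x.1 i = ∑ i, x.1 i * x.2 i from
    Finset.sum_congr rfl fun i _ => mul_comm _ _]
  exact zmod2_add_self _

/-- if `|S + S| ≤ K·|S|` then `nac(4S) ≤ 2·K⁵·nac(2S)`. -/
theorem stmt_17 (n : ℕ) (hn : 1 ≤ n)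
    (S : Set ((Fin n → ZMod 2) × (Fin n → ZMod 2))) (hfin : S.Finite)
    (hne : S.Nonempty) (K : ℝ) (hK : 1 ≤ K)
    (hd : (Nat.card ↥(S + S) : ℝ) ≤ K * (Nat.card ↥S : ℝ)) :
    (nac n (S + S + S + S) : ℝ) ≤ 2 * K ^ 5 * (nac n (S + S) : ℝ) := by
  classical
  let V := Vn n
  -- every element is its own negative
  have hneg : ∀ v : V, -v = v := by
    intro v
    have : ∀ z : ZMod 2, -z = z := by decide
    ext i <;> exact this _
  have hself : ∀ v : V, v + v = 0 := fun v => by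
    have := sub_self v
    rwa [sub_eq_add_neg, hneg] at this
  set F : Finset V := hfin.toFinset with hF
  have hFS : (F : Set V) = S := hfin.coe_toFinset
  have hFne : F.Nonempty := by
    rwa [← Finset.coe_nonempty, hFS]
  have hFpos : (0 : ℝ) < F.card := by exact_mod_cast hFne.card_pos
  -- translate the doubling hypothesis to finsets
  have hSS : S + S = ↑(F + F) := by rw [Finset.coe_add, hFS]
  have hS4 : S + S + S + S = ↑(F + F + F + F) := by
    simp only [Finset.coe_add, hFS]
  have hcard2 : (Nat.card ↥(S + S) : ℝ) = ((F + F).card : ℝ) := by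
    rw [hSS]; norm_cast
    exact Nat.card_eq_finsetCard _
  have hcardS : (Nat.card ↥S : ℝ) = (F.card : ℝ) := by
    rw [← hFS]; norm_cast
    exact Nat.card_eq_finsetCard _
  have hd' : ((F + F).card : ℝ) ≤ K * F.card := by
    rw [← hcard2, ← hcardS]; exact hd
  -- Plünnecke-Ruzsa: |5F| ≤ K^5 |F|
  have hplu : ((5 • F).card : ℚ≥0) ≤ ((F + F).card / F.card : ℚ≥0) ^ 5 * F.card :=
    Finset.pluennecke_ruzsa_inequality_nsmul_add hFne F 5
  have hpluR : ((5 • F).card : ℝ) ≤ (((F + F).card : ℝ) / F.card) ^ 5 * F.card := by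
    have := hplu
    have h2 : (((5 • F).card : ℚ≥0) : ℝ) ≤ ((((F + F).card / F.card : ℚ≥0) ^ 5 * F.card : ℚ≥0) : ℝ) := by
      exact_mod_cast this
    push_cast at h2
    convert h2 using 2
  have hratio : (((F + F).card : ℝ) / F.card) ≤ K := by
    rw [div_le_iff₀ hFpos]; exact hd'
  have hratio0 : (0 : ℝ) ≤ (((F + F).card : ℝ) / F.card) := by positivity
  have hplu5 : ((5 • F).card : ℝ) ≤ K ^ 5 * F.card := by
    calc ((5 • F).card : ℝ) ≤ (((F + F).card : ℝ) / F.card) ^ 5 * F.card := hpluR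
      _ ≤ K ^ 5 * F.card := by gcongr
  have h5F : (5 : ℕ) • F = F + F + F + F + F := by
    rw [show (5 : ℕ) = 4 + 1 from rfl, succ_nsmul, show (4 : ℕ) = 3 + 1 from rfl, succ_nsmul,
      show (3 : ℕ) = 2 + 1 from rfl, succ_nsmul, two_nsmul]
  -- Ruzsa covering: 4F ⊆ X + (F - F) with |X| ≤ K^5
  have hcov : ((F + F + F + F) + F).card ≤ K ^ 5 * F.card := by
    rw [← h5F] at *; exact hplu5
  obtain ⟨X, hXsub, hXcard, hXcov⟩ := Finset.ruzsa_covering_add hFne hcov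
  have hFF : F - F = F + F := by
    ext z
    simp only [Finset.mem_sub, Finset.mem_add]
    constructor
    · rintro ⟨a, ha, b, hb, rfl⟩; exact ⟨a, ha, b, hb, by rw [sub_eq_add_neg, hneg]⟩
    · rintro ⟨a, ha, b, hb, rfl⟩; exact ⟨a, ha, b, hb, by rw [sub_eq_add_neg, hneg]⟩
  rw [hFF] at hXcov
  -- extract a maximal anticommuting set T in 4S
  set P : Set ℕ := {k | ∃ T : Finset V,
    ↑T ⊆ S + S + S + S ∧ (∀ x ∈ T, ∀ y ∈ T, x ≠ y → sympl n x y = 1) ∧ T.card = k} with hP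
  have hPne : P.Nonempty := ⟨0, ∅, by simp, by simp, rfl⟩
  have hPbdd : BddAbove P := by
    refine ⟨(F + F + F + F).card, ?_⟩
    rintro k ⟨T, hT, -, rfl⟩
    rw [hS4] at hT
    exact Finset.card_le_card (by exact_mod_cast hT)
  have hmem : nac n (S + S + S + S) ∈ P := Nat.sSup_mem hPne hPbdd
  obtain ⟨T, hTsub, hTanti, hTcard⟩ := hmem
  -- bound for nac (2S)
  have hQbdd : BddAbove {k | ∃ T : Finset V,
      ↑T ⊆ S + S ∧ (∀ x ∈ T, ∀ y ∈ T, x ≠ y → sympl n x y = 1) ∧ T.card = k} := by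
    refine ⟨(F + F).card, ?_⟩
    rintro k ⟨U, hU, -, rfl⟩
    rw [hSS] at hU
    exact Finset.card_le_card (by exact_mod_cast hU)
  -- each t ∈ T lies in some translate x + (F+F), x ∈ X
  have hcovT : ∀ t ∈ T, ∃ x ∈ X, t + x ∈ F + F := by
    intro t ht
    have htmem : t ∈ X + (F + F) := by
      apply hXcov
      have : t ∈ (↑(F + F + F + F) : Set V) := by rw [← hS4]; exact hTsub ht
      exact_mod_cast this
    rw [Finset.mem_add] at htmem
    obtain ⟨x, hx, u, hu, rfl⟩ := htmem
    exact ⟨x, hx, by rwa [add_comm x u, add_assoc, hself, add_zero]⟩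
  -- classify elements of T by (cover translate, symplectic phase)
  set xc : V → V := fun t => if h : ∃ x ∈ X, t + x ∈ F + F then h.choose else 0 with hxc
  set f : V → V × ZMod 2 := fun t => (xc t, sympl n (xc t) t) with hf
  have hxcX : ∀ t ∈ T, xc t ∈ X ∧ t + xc t ∈ F + F := by
    intro t ht
    have h := hcovT t ht
    simp only [hxc, dif_pos h]
    exact ⟨h.choose_spec.1, h.choose_spec.2⟩
  have hfmem : ∀ t ∈ T, f t ∈ X ×ˢ (Finset.univ : Finset (ZMod 2)) := by
    intro t ht
    simp only [hf, Finset.mem_product, Finset.mem_univ, and_true]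
    exact (hxcX t ht).1
  have hsum : T.card = ∑ p ∈ X ×ˢ (Finset.univ : Finset (ZMod 2)),
      (T.filter fun t => f t = p).card :=
    Finset.card_eq_sum_card_fiberwise hfmem
  -- each fiber has size at most nac(2S)
  have hfiber : ∀ p ∈ X ×ˢ (Finset.univ : Finset (ZMod 2)),
      (T.filter fun t => f t = p).card ≤ nac n (S + S) := by
    rintro ⟨x, b⟩ -
    set Tf := T.filter fun t => f t = (x, b) with hTf
    set U := Tf.image (fun t => t + x) with hU
    have hinj : Set.InjOn (fun t => t + x) ↑Tf := fun a _ b _ h => by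
      simpa using congrArg (fun v => v + x) h
    have hUcard : U.card = Tf.card := Finset.card_image_of_injOn hinj
    have hUsub : (U : Set V) ⊆ S + S := by
      intro u hu
      rw [hU] at hu
      simp only [Finset.coe_image, Set.mem_image, Finset.mem_coe] at hu
      obtain ⟨t, ht, rfl⟩ := hu
      rw [hTf, Finset.mem_filter] at ht
      obtain ⟨htT, htf⟩ := ht
      have hx' : xc t = x := congrArg Prod.fst htf
      have := (hxcX t htT).2
      rw [hx'] at this
      rw [hSS]
      exact_mod_cast this
    have hUanti : ∀ u ∈ U, ∀ v ∈ U, u ≠ v → sympl n u v = 1 := by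
      intro u hu v hv huv
      rw [hU, Finset.mem_image] at hu hv
      obtain ⟨t, ht, rfl⟩ := hu
      obtain ⟨t', ht', rfl⟩ := hv
      rw [hTf, Finset.mem_filter] at ht ht'
      obtain ⟨htT, htf⟩ := ht
      obtain ⟨ht'T, ht'f⟩ := ht'
      have hxt : xc t = x := congrArg Prod.fst htf
      have hxt' : xc t' = x := congrArg Prod.fst ht'f
      have hbt : sympl n x t = b := by rw [← hxt]; exact congrArg Prod.snd htf
      have hbt' : sympl n x t' = b := by rw [← hxt']; exact congrArg Prod.snd ht'f
      have htt' : t ≠ t' := fun h => huv (by rw [h])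
      have h1 : sympl n t t' = 1 := hTanti t htT t' ht'T htt'
      rw [sympl_add_left, sympl_add_right, sympl_add_right, h1, sympl_self,
        sympl_comm n t x, hbt, hbt', add_zero]
      rw [add_assoc, zmod2_add_self, add_zero]
    have : Tf.card ≤ nac n (S + S) := by
      rw [← hUcard]
      exact le_csSup hQbdd ⟨U, hUsub, hUanti, rfl⟩
    exact this
  -- put everything together
  have hcount : T.card ≤ (X.card * 2) * nac n (S + S) := by
    rw [hsum]
    calc ∑ p ∈ X ×ˢ (Finset.univ : Finset (ZMod 2)), (T.filter fun t => f t = p).card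
        ≤ ∑ p ∈ X ×ˢ (Finset.univ : Finset (ZMod 2)), nac n (S + S) :=
          Finset.sum_le_sum hfiber
      _ = (X.card * 2) * nac n (S + S) := by
          rw [Finset.sum_const, Finset.card_product, smul_eq_mul, Finset.card_univ, ZMod.card]
  have hXR : (X.card : ℝ) ≤ K ^ 5 := hXcard
  have hnacR : (nac n (S + S + S + S) : ℝ) ≤ (X.card : ℝ) * 2 * nac n (S + S) := by
    rw [← hTcard]
    calc (T.card : ℝ) ≤ ((X.card * 2) * nac n (S + S) : ℕ) := by exact_mod_cast hcount
      _ = (X.card : ℝ) * 2 * nac n (S + S) := by push_cast; ring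
  calc (nac n (S + S + S + S) : ℝ) ≤ (X.card : ℝ) * 2 * nac n (S + S) := hnacR
    _ ≤ K ^ 5 * 2 * nac n (S + S) := by
        have : (0 : ℝ) ≤ (nac n (S + S) : ℝ) := by positivity
        gcongr
    _ = 2 * K ^ 5 * nac n (S + S) := by ring
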